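/- For every natural number n ≥ 1 there exist, for each k ∈ Fin (n−1), distinct vertices i_k, j_k ∈ Fin n and a word w_k in the free group on Fin n, such that the graph on Fin n whose edge set is {{i_k, j_k} : k ∈ Fin (n−1)} is connected (hence a tree), and the group G presented by generators Fin n and the n−1 relators x_{i_k} · w_k · x_{j_k}⁻¹ · w_k⁻¹ has rank exactly n: G is generated by n elements, and no subset of G of cardinality less than n generates G. -/

import Mathlib

/-!
Send the generators of the LOT on the path `0 — 1 — ⋯ — m`, with labels `(x_k x_{k+1})²`, to
reflections of the generalized dihedral group `(ZMod 3)^m ⋊ C₂`: `x_0` to `sr 0` and `x_{k+1}`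
to `sr e_k`. For two reflections `x, y` we have `x (xy)² = (xy)² y` as soon as `3 = 0`, so the
relators hold, and these `m + 1` reflections generate. Conversely, if a finite set `S` generates
`V ⋊ C₂`, it contains a reflection `sr a`; replacing each reflection `sr v ∈ S` by `v - a` and
each translation `r v ∈ S` by `v` gives at most `|S| - 1` nonzero vectors generating `V`, since
for every subgroup `U ≤ V` the elements `r u`, `sr (a + u)` (`u ∈ U`) form a subgroup. As
`(ZMod 3)^m` needs `m` generators, every generating set of the LOT group has at least `m + 1`
elements.
-/

open Function

theorem AddSubgroup.closure_eq_top_of_span_zmod_eq_top {n : ℕ} {M : Type*} [AddCommGroup M]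
    [Module (ZMod n) M] {s : Set M} (hs : Submodule.span (ZMod n) s = ⊤) :
    AddSubgroup.closure s = ⊤ :=
  eq_top_iff.mpr fun x _ =>
    (Submodule.span_le (p := toZModSubmodule n (closure s))).mpr subset_closure
      (hs ▸ Submodule.mem_top : x ∈ Submodule.span (ZMod n) s)

theorem SimpleGraph.connected_fromEdgeSet_castSucc_succ (m : ℕ) :
    (fromEdgeSet (Set.range fun k : Fin m => s(k.castSucc, k.succ))).Connected := by
  set G := fromEdgeSet (Set.range fun k : Fin m => s(k.castSucc, k.succ))
  have hreach : ∀ x, G.Reachable 0 x := by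
    intro x
    induction x using Fin.induction with
    | zero => rfl
    | succ k ih =>
      exact ih.trans (Adj.reachable ((fromEdgeSet_adj _).mpr ⟨⟨k, rfl⟩, k.castSucc_lt_succ.ne⟩))
  exact (connected_iff_exists_forall_reachable G).mpr ⟨0, hreach⟩

/-- `V ⋊ C₂` with `C₂` acting by negation, in the conventions of `DihedralGroup n`, which is the
case `V = ZMod n`. -/
inductive GeneralizedDihedralGroup (V : Type*)
  | r : V → GeneralizedDihedralGroup V
  | sr : V → GeneralizedDihedralGroup V

namespace GeneralizedDihedralGroup

variable {V : Type*} [AddCommGroup V]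

instance : Mul (GeneralizedDihedralGroup V) where
  mul
    | r i, r j => r (i + j)
    | r i, sr j => sr (j - i)
    | sr i, r j => sr (i + j)
    | sr i, sr j => r (j - i)

instance : One (GeneralizedDihedralGroup V) := ⟨r 0⟩

instance : Inv (GeneralizedDihedralGroup V) where
  inv
    | r i => r (-i)
    | sr i => sr i

@[simp] theorem r_mul_r (i j : V) : r i * r j = r (i + j) := rfl
@[simp] theorem r_mul_sr (i j : V) : r i * sr j = sr (j - i) := rfl
@[simp] theorem sr_mul_r (i j : V) : sr i * r j = sr (i + j) := rfl
@[simp] theorem sr_mul_sr (i j : V) : sr i * sr j = r (j - i) := rfl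
@[simp] theorem inv_r (i : V) : (r i)⁻¹ = r (-i) := rfl
@[simp] theorem inv_sr (i : V) : (sr i)⁻¹ = sr i := rfl
@[simp] theorem r_zero : r 0 = (1 : GeneralizedDihedralGroup V) := rfl

instance : Group (GeneralizedDihedralGroup V) where
  mul_assoc := by
    rintro (a | a) (b | b) (c | c) <;>
      simp only [r_mul_r, r_mul_sr, sr_mul_r, sr_mul_sr, r.injEq, sr.injEq] <;> abel
  one_mul := by rintro (a | a) <;> simp [← r_zero]
  mul_one := by rintro (a | a) <;> simp [← r_zero]
  inv_mul_cancel := by rintro (a | a) <;> simp [← r_zero]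

theorem sr_mul_sq_sr_mul_sr {a b : V} (h : 3 • a = 3 • b) :
    sr a * (sr a * sr b) ^ 2 = (sr a * sr b) ^ 2 * sr b := by
  simp only [sq, sr_mul_sr, r_mul_r, sr_mul_r, r_mul_sr, sr.injEq]
  rw [← sub_eq_zero]
  calc a + (b - a + (b - a)) - (b - (b - a + (b - a))) = 3 • b - 3 • a := by abel
    _ = 0 := by rw [h, sub_self]

def rotations : Subgroup (GeneralizedDihedralGroup V) where
  carrier := Set.range r
  mul_mem' := by rintro _ _ ⟨a, rfl⟩ ⟨b, rfl⟩; exact ⟨a + b, rfl⟩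
  one_mem' := ⟨0, rfl⟩
  inv_mem' := by rintro _ ⟨a, rfl⟩; exact ⟨-a, rfl⟩

theorem sr_notMem_rotations (a : V) :
    sr a ∉ (rotations : Subgroup (GeneralizedDihedralGroup V)) := by
  rintro ⟨b, hb⟩
  cases hb

def offset (a : V) : GeneralizedDihedralGroup V → V
  | r v => v
  | sr v => v - a

/-- The subgroup generated by `r '' U` and `sr a`. -/
def ofAddSubgroup (U : AddSubgroup V) (a : V) : Subgroup (GeneralizedDihedralGroup V) where
  carrier := {g | offset a g ∈ U}
  mul_mem' := by
    rintro (x | x) (y | y) (hx : _ ∈ U) (hy : _ ∈ U)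
    · exact add_mem hx hy
    · show offset a (sr (y - x)) ∈ U
      convert sub_mem hy hx using 1; simp only [offset]; abel
    · show offset a (sr (x + y)) ∈ U
      convert add_mem hx hy using 1; simp only [offset]; abel
    · show offset a (r (y - x)) ∈ U
      convert sub_mem hy hx using 1; simp only [offset]; abel
  one_mem' := zero_mem U
  inv_mem' := by
    rintro (x | x) hx
    · exact neg_mem (show x ∈ U from hx)
    · exact hx

theorem closure_insert_sr_zero_image_sr_eq_top {B : Set V} (hB : AddSubgroup.closure B = ⊤) :
    Subgroup.closure (insert (sr 0) (sr '' B)) = ⊤ := by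
  set K := Subgroup.closure (insert (sr (0 : V)) (sr '' B))
  have hsr_zero : sr 0 ∈ K := Subgroup.subset_closure (Set.mem_insert _ _)
  let rotationsIn : AddSubgroup V :=
    { carrier := {v | r v ∈ K}
      add_mem' := fun (ha : r _ ∈ K) (hb : r _ ∈ K) => by simpa using mul_mem ha hb
      zero_mem' := one_mem K
      neg_mem' := fun (ha : r _ ∈ K) => by simpa using inv_mem ha }
  have hr : ∀ v, r v ∈ K := by
    suffices ⊤ ≤ rotationsIn from fun v => this (AddSubgroup.mem_top v)
    refine hB ▸ (AddSubgroup.closure_le rotationsIn).mpr fun b hb => ?_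
    show r b ∈ K
    simpa using mul_mem hsr_zero (Subgroup.subset_closure (Set.mem_insert_of_mem _ ⟨b, hb, rfl⟩))
  refine eq_top_iff.mpr fun g _ => ?_
  rcases g with v | v
  · exact hr v
  · simpa using mul_mem hsr_zero (hr v)

theorem exists_finset_card_lt_of_closure_eq_top {S : Finset (GeneralizedDihedralGroup V)}
    (hS : Subgroup.closure (S : Set (GeneralizedDihedralGroup V)) = ⊤) :
    ∃ T : Finset V, T.card < S.card ∧ AddSubgroup.closure (T : Set V) = ⊤ := by
  classical
  obtain ⟨a, ha⟩ : ∃ a, sr a ∈ S := by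
    by_contra! h
    have : Subgroup.closure (S : Set (GeneralizedDihedralGroup V)) ≤ rotations :=
      (Subgroup.closure_le _).mpr fun
      | r v, _ => ⟨v, rfl⟩
      | sr v, hv => absurd hv (h v)
    exact sr_notMem_rotations 0 (this (hS ▸ Subgroup.mem_top _))
  refine ⟨(S.image (offset a)).erase 0, ?_, ?_⟩
  · calc _ < (S.image (offset a)).card :=
          Finset.card_erase_lt_of_mem (Finset.mem_image.mpr ⟨_, ha, sub_self a⟩)
      _ ≤ S.card := Finset.card_image_le
  · set U := AddSubgroup.closure (((S.image (offset a)).erase 0 : Finset V) : Set V)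
    have hSU : Subgroup.closure (S : Set _) ≤ ofAddSubgroup U a := by
      refine (Subgroup.closure_le _).mpr fun g hg => ?_
      by_cases h0 : offset a g = 0
      · exact (h0 ▸ zero_mem U : offset a g ∈ U)
      · exact AddSubgroup.subset_closure
          (Finset.mem_erase.mpr ⟨h0, Finset.mem_image_of_mem _ hg⟩)
    rw [hS] at hSU
    exact eq_top_iff.mpr fun v _ => hSU (Subgroup.mem_top (r v))

theorem finrank_lt_card_of_closure_eq_top (K : Type*) [DivisionRing K] [Module K V]
    {S : Finset (GeneralizedDihedralGroup V)}
    (hS : Subgroup.closure (S : Set (GeneralizedDihedralGroup V)) = ⊤) :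
    Module.finrank K V < S.card := by
  obtain ⟨T, hTS, hT⟩ := exists_finset_card_lt_of_closure_eq_top hS
  have hspan : Submodule.span K (T : Set V) = ⊤ :=
    eq_top_iff.mpr fun v _ =>
      (AddSubgroup.closure_le (Submodule.span K (T : Set V)).toAddSubgroup).mpr
        Submodule.subset_span (hT ▸ AddSubgroup.mem_top v)
  calc Module.finrank K V = (T : Set V).finrank K := by
        rw [Set.finrank, hspan, finrank_top]
    _ ≤ T.card := finrank_span_finset_le_card T
    _ < S.card := hTS

end GeneralizedDihedralGroup

open GeneralizedDihedralGroup

namespace PathLOT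

variable (m : ℕ)

def rels : Set (FreeGroup (Fin (m + 1))) :=
  Set.range fun k : Fin m =>
    FreeGroup.of k.castSucc * (FreeGroup.of k.castSucc * FreeGroup.of k.succ) ^ 2 *
      (FreeGroup.of k.succ)⁻¹ * ((FreeGroup.of k.castSucc * FreeGroup.of k.succ) ^ 2)⁻¹

noncomputable def reflectionVector : Fin (m + 1) → Fin m → ZMod 3 :=
  Fin.cons 0 (Pi.basisFun (ZMod 3) (Fin m))

theorem reflectionVector_injective : Injective (reflectionVector m) :=
  Fin.cons_injective_iff.mpr
    ⟨fun ⟨l, hl⟩ => (Pi.basisFun _ _).ne_zero l hl, (Pi.basisFun _ _).injective⟩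

noncomputable def toDihedral :
    PresentedGroup (rels m) →* GeneralizedDihedralGroup (Fin m → ZMod 3) :=
  PresentedGroup.toGroup (f := sr ∘ reflectionVector m) <| by
    rintro _ ⟨k, rfl⟩
    simp only [map_mul, map_inv, map_pow, FreeGroup.lift_apply_of, comp_apply]
    rw [mul_inv_eq_one, mul_inv_eq_iff_eq_mul]
    exact sr_mul_sq_sr_mul_sr (by simp only [ZModModule.char_nsmul_eq_zero])

variable {m}

theorem toDihedral_of (x : Fin (m + 1)) :
    toDihedral m (PresentedGroup.of x) = sr (reflectionVector m x) :=
  PresentedGroup.toGroup.of _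

theorem of_injective : Injective (PresentedGroup.of : Fin (m + 1) → PresentedGroup (rels m)) := by
  refine Injective.of_comp (f := toDihedral m) ?_
  have : toDihedral m ∘ PresentedGroup.of = sr ∘ reflectionVector m := funext toDihedral_of
  rw [this]
  exact Injective.comp (fun _ _ => sr.inj) (reflectionVector_injective m)

theorem toDihedral_surjective : Surjective (toDihedral m) := by
  have hB : AddSubgroup.closure (Set.range (Pi.basisFun (ZMod 3) (Fin m))) = ⊤ :=
    AddSubgroup.closure_eq_top_of_span_zmod_eq_top (Pi.basisFun _ _).span_eq
  rw [← MonoidHom.range_eq_top, eq_top_iff, ← closure_insert_sr_zero_image_sr_eq_top hB,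
    Subgroup.closure_le]
  rintro _ (rfl | ⟨_, ⟨l, rfl⟩, rfl⟩)
  · exact ⟨PresentedGroup.of 0, toDihedral_of 0⟩
  · exact ⟨PresentedGroup.of l.succ, toDihedral_of l.succ⟩

theorem succ_le_card_of_closure_eq_top {S : Finset (PresentedGroup (rels m))}
    (hS : Subgroup.closure (S : Set (PresentedGroup (rels m))) = ⊤) : m + 1 ≤ S.card := by
  classical
  have h := finrank_lt_card_of_closure_eq_top (ZMod 3) (S := S.image (toDihedral m)) <| by
    rw [Finset.coe_image, ← MonoidHom.map_closure, hS,
      Subgroup.map_top_of_surjective _ toDihedral_surjective]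
  rw [Module.finrank_fin_fun] at h
  exact h.trans_le Finset.card_image_le

end PathLOT

theorem stmt_5 (n : ℕ) (hn : 1 ≤ n) :
    ∃ (i j : Fin (n - 1) → Fin n) (w : Fin (n - 1) → FreeGroup (Fin n)),
      (∀ k, i k ≠ j k) ∧
      (SimpleGraph.fromEdgeSet (Set.range fun k => s(i k, j k))).Connected ∧
      (∃ S : Finset (PresentedGroup
          (Set.range fun k => FreeGroup.of (i k) * w k * (FreeGroup.of (j k))⁻¹ * (w k)⁻¹)),
        S.card = n ∧ Subgroup.closure (S : Set (PresentedGroup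
          (Set.range fun k => FreeGroup.of (i k) * w k * (FreeGroup.of (j k))⁻¹ * (w k)⁻¹))) = ⊤) ∧
      (∀ S : Finset (PresentedGroup
          (Set.range fun k => FreeGroup.of (i k) * w k * (FreeGroup.of (j k))⁻¹ * (w k)⁻¹)),
        S.card < n → Subgroup.closure (S : Set (PresentedGroup
          (Set.range fun k => FreeGroup.of (i k) * w k * (FreeGroup.of (j k))⁻¹ * (w k)⁻¹))) ≠ ⊤) := by
  obtain ⟨m, rfl⟩ : ∃ m, n = m + 1 := ⟨n - 1, by omega⟩
  refine ⟨Fin.castSucc, Fin.succ, fun k => (FreeGroup.of k.castSucc * FreeGroup.of k.succ) ^ 2,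
    fun k => k.castSucc_lt_succ.ne, SimpleGraph.connected_fromEdgeSet_castSucc_succ m,
    ⟨Finset.univ.map ⟨PresentedGroup.of, PathLOT.of_injective⟩, ?_, ?_⟩,
    fun S hS hclosure => hS.not_ge (PathLOT.succ_le_card_of_closure_eq_top hclosure)⟩
  · simp
  · rw [Finset.coe_map, Finset.coe_univ, Set.image_univ]
    exact PresentedGroup.closure_range_of _
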